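/- (Borobia's theorem) Let Λ = (λ_1, λ_2, …, λ_n) be a list of real numbers with λ_1 ≥ λ_2 ≥ … ≥ λ_p ≥ 0 > λ_{p+1} ≥ … ≥ λ_n, where p is the greatest index j with λ_j ≥ 0. Suppose there exist t (1 ≤ t ≤ n − p) and a partition of the multiset {λ_{p+1}, λ_{p+2}, …, λ_n} into nonempty multisets J_1, J_2, …, J_t such that, writing μ_{p+j} = ∑_{λ∈J_j} λ, the list (λ_1, …, λ_p, μ_{p+1}, …, μ_{p+t}) satisfies λ_1 ≥ λ_2 ≥ … ≥ λ_p ≥ μ_{p+1} ≥ μ_{p+2} ≥ … ≥ μ_{p+t} together with the Kellogg conditions: with N = p + t, K = { i ∈ {2, …, ⌊(N+1)/2⌋} : the i-th element is ≥ 0 and its sum with the (N−i+2)-th element is < 0 }, (1) for every k ∈ K, the first element is ≥ minus the sum over i ∈ K with i < k of (i-th element + (N−i+2)-th element) minus the (N−k+2)-th element, and (2) if N ≥ 2p, the first element is ≥ minus the sum over i ∈ K of (i-th element + (N−i+2)-th element) minus the sum of the (p+1)-th through (N−p+1)-th elements. Then Λ is realizable. -/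

import Mathlib

/-!
Call `(ρ, Λ)` Perron-realizable when some nonnegative matrix with a nonnegative eigenvector for
`ρ` has spectrum `ρ ::ₘ Λ`. Two such matrices `A` (root `α`) and `B` (root `β`) glue, through a
nonnegative rank-one coupling in each off-diagonal block, into one whose spectrum is that of
`A` and `B` with `α, β` replaced by any `θ₁ ≥ α` and `θ₂` such that `θ₁ + θ₂ = α + β` and
`θ₁ θ₂ ≤ α β`. Gluing onto `1 × 1` zero blocks gives Suleimanova's theorem for one nonnegative
value `ρ` and nonpositive values `S` with `ρ + ∑ S ≥ 0`, so each group `J_j` acts as the single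
value `μ_{p+j}` (a Suleimanova block with root `-μ_{p+j}`). Kellogg's construction is then run on
`μ`: each `i ∉ K` with its partner group `N - i + 2` is a Suleimanova block, the unpaired middle
groups are peeled off a block with root `μ_1 + ∑_{i ∈ K} (μ_i + μ_{N-i+2})`, and the pairs in
`K` are glued onto it from the largest index down; Kellogg's conditions are exactly what each
gluing step needs.
-/

open Polynomial Matrix Finset

namespace Matrix

variable {ι ι₁ ι₂ : Type*} [Fintype ι] [DecidableEq ι] [Fintype ι₁] [DecidableEq ι₁]
  [Fintype ι₂] [DecidableEq ι₂]

section CommRing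

variable {R : Type*} [CommRing R]

theorem det_sub_vecMulVec (W : Matrix ι ι R) [Invertible W] (u v : ι → R) :
    (W - vecMulVec u v).det = W.det * (1 - v ⬝ᵥ ⅟W *ᵥ u) := by
  rw [sub_eq_add_neg, ← neg_vecMulVec, vecMulVec_eq Unit,
    det_add_replicateCol_mul_replicateRow (isUnit_det_of_invertible W), invOf_eq_nonsing_inv,
    det_unique (1 + _), Matrix.add_apply, one_apply_eq, Matrix.mul_assoc, ← replicateCol_mulVec,
    replicateRow_mul_replicateCol_apply, mulVec_neg, dotProduct_neg, sub_eq_add_neg]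

theorem scalar_sub_fromBlocks (r : R) (A : Matrix ι₁ ι₁ R) (U : Matrix ι₁ ι₂ R)
    (V : Matrix ι₂ ι₁ R) (B : Matrix ι₂ ι₂ R) :
    scalar (ι₁ ⊕ ι₂) r - fromBlocks A U V B =
      fromBlocks (scalar ι₁ r - A) (-U) (-V) (scalar ι₂ r - B) := by
  ext (i | i) (j | j) <;> simp [diagonal_apply]

end CommRing

section Field

variable {K : Type*} [Field K]

theorem invOf_mulVec_of_mulVec_eq_smul {W : Matrix ι ι K} [Invertible W] {x : ι → K} {c : K}
    (hc : c ≠ 0) (h : W *ᵥ x = c • x) : ⅟W *ᵥ x = c⁻¹ • x := by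
  rw [← inv_smul_smul₀ hc (⅟W *ᵥ x), ← mulVec_smul, ← h, mulVec_mulVec, invOf_mul_self,
    one_mulVec]

theorem charpoly_fromBlocks_vecMulVec [Infinite K] {A : Matrix ι₁ ι₁ K} {B : Matrix ι₂ ι₂ K}
    {x e : ι₁ → K} {y d : ι₂ → K} {α β : K} (c : K) (hx : A *ᵥ x = α • x)
    (hy : B *ᵥ y = β • y) (hex : e ⬝ᵥ x = 1) (hdy : d ⬝ᵥ y = 1) :
    (fromBlocks A (vecMulVec x d) (c • vecMulVec y e) B).charpoly * ((X - C α) * (X - C β)) =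
      A.charpoly * B.charpoly * ((X - C α) * (X - C β) - C c) := by
  set Q := A.charpoly * B.charpoly * ((X - C α) * (X - C β))
  have hQ : Q ≠ 0 :=
    (((charpoly_monic A).mul (charpoly_monic B)).mul
      ((monic_X_sub_C α).mul (monic_X_sub_C β))).ne_zero
  -- Off the roots of `Q`, both sides can be evaluated through Schur complements.
  refine eq_of_infinite_eval_eq _ _
    ((finite_setOfPred_isRoot hQ).infinite_compl.mono fun r hr ↦ ?_)
  simp only [Set.mem_compl_iff, Set.mem_ofPred_eq, IsRoot, Q, eval_mul, eval_sub, eval_X, eval_C,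
    mul_eq_zero, not_or] at hr
  obtain ⟨⟨hA, hB⟩, hα, hβ⟩ := hr
  rw [eval_charpoly] at hA hB
  let _ := invertibleOfIsUnitDet _ (isUnit_iff_ne_zero.2 hA)
  let _ := invertibleOfIsUnitDet _ (isUnit_iff_ne_zero.2 hB)
  have hx' : ⅟(scalar ι₁ r - A) *ᵥ x = (r - α)⁻¹ • x :=
    invOf_mulVec_of_mulVec_eq_smul hα (by simp [sub_mulVec, hx, sub_smul])
  have hy' : ⅟(scalar ι₂ r - B) *ᵥ y = (r - β)⁻¹ • y :=
    invOf_mulVec_of_mulVec_eq_smul hβ (by simp [sub_mulVec, hy, sub_smul])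
  have hdet : (scalar _ r - fromBlocks A (vecMulVec x d) (c • vecMulVec y e) B).det =
      (scalar ι₁ r - A).det * ((scalar ι₂ r - B).det * (1 - c * (r - α)⁻¹ * (r - β)⁻¹)) := by
    rw [scalar_sub_fromBlocks, det_fromBlocks₁₁]
    simp only [Matrix.neg_mul, Matrix.mul_neg, neg_neg]
    rw [Matrix.smul_mul, Matrix.smul_mul, Matrix.mul_assoc, mul_vecMulVec, hx',
      vecMulVec_mul_vecMulVec, dotProduct_smul, hex, ← smul_vecMulVec, det_sub_vecMulVec,
      mulVec_smul, hy']
    simp only [smul_dotProduct, dotProduct_smul, hdy, smul_eq_mul]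
    ring
  rw [Set.mem_ofPred_eq]
  simp only [eval_mul, eval_sub, eval_X, eval_C, eval_charpoly, hdet]
  field_simp

end Field

end Matrix

theorem exists_nonneg_dotProduct_eq_one {K ι : Type*} [Field K] [LinearOrder K]
    [IsStrictOrderedRing K] [Fintype ι] [DecidableEq ι] {x : ι → K} (hx : 0 ≤ x) (hne : x ≠ 0) :
    ∃ e : ι → K, 0 ≤ e ∧ e ⬝ᵥ x = 1 := by
  obtain ⟨i, hi⟩ := Function.ne_iff.1 hne
  have hpos : 0 < x i := lt_of_le_of_ne (hx i) (Ne.symm hi)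
  refine ⟨Pi.single i (x i)⁻¹, ?_, by rw [single_dotProduct, inv_mul_cancel₀ hpos.ne']⟩
  exact Pi.single_nonneg.2 (inv_nonneg.2 hpos.le)

def Realizable (Λ : Multiset ℝ) : Prop :=
  ∃ (ι : Type) (_ : Fintype ι) (_ : DecidableEq ι) (A : Matrix ι ι ℝ),
    (∀ i j, 0 ≤ A i j) ∧ A.charpoly = (Λ.map fun r ↦ X - C r).prod

def PerronRealizable (ρ : ℝ) (Λ : Multiset ℝ) : Prop :=
  ∃ (ι : Type) (_ : Fintype ι) (_ : DecidableEq ι) (A : Matrix ι ι ℝ) (x : ι → ℝ),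
    (∀ i j, 0 ≤ A i j) ∧ 0 ≤ x ∧ x ≠ 0 ∧ A *ᵥ x = ρ • x ∧
      A.charpoly = (X - C ρ) * (Λ.map fun r ↦ X - C r).prod

theorem Realizable.zero : Realizable 0 :=
  ⟨Fin 0, inferInstance, inferInstance, 0, fun i ↦ i.elim0, by simp⟩

theorem Realizable.add {Λ₁ Λ₂ : Multiset ℝ} (H₁ : Realizable Λ₁) (H₂ : Realizable Λ₂) :
    Realizable (Λ₁ + Λ₂) := by
  obtain ⟨ι₁, _, _, A, hA, hcpA⟩ := H₁
  obtain ⟨ι₂, _, _, B, hB, hcpB⟩ := H₂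
  refine ⟨ι₁ ⊕ ι₂, inferInstance, inferInstance, fromBlocks A 0 0 B, ?_, ?_⟩
  · rintro (i | i) (j | j)
    exacts [hA i j, le_rfl, le_rfl, hB i j]
  · rw [charpoly_fromBlocks_zero₁₂, hcpA, hcpB, Multiset.map_add, Multiset.prod_add]

theorem Realizable.sum {γ : Type*} (s : Finset γ) (F : γ → Multiset ℝ)
    (h : ∀ i ∈ s, Realizable (F i)) : Realizable (∑ i ∈ s, F i) :=
  sum_induction F Realizable (fun _ _ ↦ Realizable.add) Realizable.zero h

theorem PerronRealizable.realizable {ρ : ℝ} {Λ : Multiset ℝ} (H : PerronRealizable ρ Λ) :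
    Realizable (ρ ::ₘ Λ) := by
  obtain ⟨ι, _, _, A, -, hA, -, -, -, hcp⟩ := H
  exact ⟨ι, inferInstance, inferInstance, A, hA, by rw [hcp, Multiset.map_cons, Multiset.prod_cons]⟩

theorem Realizable.exists_matrix {Λ : Multiset ℝ} {n : ℕ} (H : Realizable Λ)
    (hn : Multiset.card Λ = n) :
    ∃ A : Matrix (Fin n) (Fin n) ℝ, (∀ i j, 0 ≤ A i j) ∧
      A.charpoly = (Λ.map fun r ↦ X - C r).prod := by
  obtain ⟨ι, _, _, A, hA, hcp⟩ := H
  have hcard : Fintype.card ι = n := by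
    rw [← charpoly_natDegree_eq_dim A, hcp, natDegree_multiset_prod_X_sub_C_eq_card, hn]
  let e := Fintype.equivFinOfCardEq hcard
  exact ⟨reindex e e A, fun i j ↦ hA _ _, by rw [charpoly_reindex, hcp]⟩

theorem perronRealizable_zero {ρ : ℝ} (hρ : 0 ≤ ρ) : PerronRealizable ρ 0 := by
  refine ⟨Fin 1, inferInstance, inferInstance, of fun _ _ ↦ ρ, 1, fun _ _ ↦ hρ, zero_le_one,
    one_ne_zero, ?_, ?_⟩
  · ext i
    simp [mulVec, dotProduct]
  · simp [charpoly]

theorem PerronRealizable.couple {α β θ₁ θ₂ : ℝ} {Λ₁ Λ₂ : Multiset ℝ}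
    (H₁ : PerronRealizable α Λ₁) (H₂ : PerronRealizable β Λ₂) (hsum : θ₁ + θ₂ = α + β)
    (hprod : θ₁ * θ₂ ≤ α * β) (hα : α ≤ θ₁) : PerronRealizable θ₁ (θ₂ ::ₘ (Λ₁ + Λ₂)) := by
  obtain ⟨ι₁, _, _, A, x, hA, hx, hx0, hAx, hcpA⟩ := H₁
  obtain ⟨ι₂, _, _, B, y, hB, hy, hy0, hBy, hcpB⟩ := H₂
  obtain ⟨e, he, hex⟩ := exists_nonneg_dotProduct_eq_one hx hx0
  obtain ⟨d, hd, hdy⟩ := exists_nonneg_dotProduct_eq_one hy hy0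
  -- `c = (θ₁ - α) (θ₁ - β)`, so the coupled block `!![α, 1; c, β]` has eigenvalues `θ₁, θ₂`.
  set c := α * β - θ₁ * θ₂
  have hc : 0 ≤ c := sub_nonneg.2 hprod
  refine ⟨ι₁ ⊕ ι₂, inferInstance, inferInstance,
    fromBlocks A (vecMulVec x d) (c • vecMulVec y e) B, Sum.elim x ((θ₁ - α) • y),
    ?_, ?_, ?_, ?_, ?_⟩
  · rintro (i | i) (j | j)
    · exact hA i j
    · exact mul_nonneg (hx i) (hd j)
    · exact mul_nonneg hc (mul_nonneg (hy i) (he j))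
    · exact hB i j
  · rintro (i | i)
    · exact hx i
    · exact mul_nonneg (sub_nonneg.2 hα) (hy i)
  · exact fun h ↦ hx0 (funext fun i ↦ congrFun h (Sum.inl i))
  · rw [fromBlocks_mulVec, Sum.elim_comp_inl, Sum.elim_comp_inr, smul_mulVec, mulVec_smul,
      mulVec_smul, hAx, hBy, vecMulVec_mulVec, vecMulVec_mulVec, hdy, hex]
    ext (i | i)
    · simp only [MulOpposite.op_one, one_smul, Sum.elim_inl, Pi.add_apply, Pi.smul_apply,
        smul_eq_mul]
      ring
    · simp only [MulOpposite.op_one, one_smul, Sum.elim_inr, Pi.add_apply, Pi.smul_apply,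
        smul_eq_mul, c]
      linear_combination (-θ₁ * y i) * hsum
  · have hquad : (X - C α) * (X - C β) - C c = (X - C θ₁) * (X - C θ₂) := by
      have : C α + C β = C θ₁ + C θ₂ := by rw [← C_add, ← C_add, hsum]
      simp only [c, C_sub, C_mul]
      linear_combination (-X) * this
    apply mul_right_cancel₀ (mul_ne_zero (X_sub_C_ne_zero α) (X_sub_C_ne_zero β))
    rw [charpoly_fromBlocks_vecMulVec c hAx hBy hex hdy, hquad, hcpA, hcpB, Multiset.map_cons,
      Multiset.prod_cons, Multiset.map_add, Multiset.prod_add]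
    ring

theorem PerronRealizable.of_nonpos {ρ : ℝ} {S : Multiset ℝ} (hS : ∀ ν ∈ S, ν ≤ 0)
    (h : 0 ≤ ρ + S.sum) : PerronRealizable ρ S := by
  induction S using Multiset.induction_on generalizing ρ with
  | empty => simpa using perronRealizable_zero h
  | cons ν S ih =>
    have hν : ν ≤ 0 := hS ν (Multiset.mem_cons_self ν S)
    have hS' : ∀ μ ∈ S, μ ≤ 0 := fun μ hμ ↦ hS μ (Multiset.mem_cons_of_mem hμ)
    have hsum : S.sum ≤ 0 := by simpa using Multiset.sum_le_card_nsmul S 0 hS'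
    rw [Multiset.sum_cons] at h
    have H := (ih hS' (by linarith : 0 ≤ ρ + ν + S.sum)).couple (perronRealizable_zero le_rfl)
      (θ₁ := ρ) (θ₂ := ν) (by ring) (by nlinarith) (by linarith)
    simpa using H

theorem PerronRealizable.cons_add {ρ a : ℝ} {Λ S : Multiset ℝ} (H : PerronRealizable ρ Λ)
    (hS : ∀ ν ∈ S, ν ≤ 0) (hpair : a + S.sum ≤ 0) (ha : a ≤ ρ) :
    PerronRealizable (ρ - (a + S.sum)) (a ::ₘ (Λ + S)) :=
  H.couple (of_nonpos (ρ := -S.sum) hS (by simp)) (by ring)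
    (by nlinarith [mul_nonneg (neg_nonneg.2 hpair) (sub_nonneg.2 ha)]) (by linarith)

/-- The pairs `(a k, S k)` are glued on in decreasing order of `k`. -/
theorem PerronRealizable.add_sum_cons {κ : Type*} [LinearOrder κ] {ρ : ℝ} {Λ : Multiset ℝ}
    (T : Finset κ) (a : κ → ℝ) (S : κ → Multiset ℝ) (hS : ∀ k ∈ T, ∀ ν ∈ S k, ν ≤ 0)
    (hpair : ∀ k ∈ T, a k + (S k).sum ≤ 0)
    (hρ : ∀ k ∈ T, 0 ≤ ρ + ∑ i ∈ T with i < k, (a i + (S i).sum) + (S k).sum)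
    (H : PerronRealizable (ρ + ∑ k ∈ T, (a k + (S k).sum)) Λ) :
    PerronRealizable ρ (Λ + ∑ k ∈ T, a k ::ₘ S k) := by
  induction T using Finset.induction_on_max generalizing Λ with
  | empty => simpa using H
  | insert m T hlt ih =>
    have hm : m ∉ T := fun h ↦ lt_irrefl m (hlt m h)
    have hfilter : ∀ k ∈ insert m T, (insert m T).filter (· < k) = T.filter (· < k) := by
      intro k hk
      rw [filter_insert, if_neg (not_lt.2 ?_)]
      rcases mem_insert.1 hk with rfl | hk
      exacts [le_rfl, (hlt k hk).le]
    rw [sum_insert hm] at H ⊢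
    have Hm := H.cons_add (hS m (mem_insert_self m T)) (hpair m (mem_insert_self m T)) (by
      have := hρ m (mem_insert_self m T)
      rw [hfilter m (mem_insert_self m T), filter_true_of_mem hlt] at this
      linarith)
    have := ih (fun k hk ↦ hS k (mem_insert_of_mem hk)) (fun k hk ↦ hpair k (mem_insert_of_mem hk))
      (fun k hk ↦ by simpa [hfilter k (mem_insert_of_mem hk)] using hρ k (mem_insert_of_mem hk))
      (by convert Hm using 1; ring)
    convert this using 1
    rw [← Multiset.singleton_add, ← Multiset.singleton_add]
    abel

/-- The index set `K` of Kellogg's conditions for `(μ 1, …, μ N)`, `N = p + t`. -/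
noncomputable def kelloggSet (p t : ℕ) (μ : ℕ → ℝ) : Finset ℕ :=
  (Icc 2 ((p + t + 1) / 2)).filter fun i ↦ 0 ≤ μ i ∧ μ i + μ (p + t - i + 2) < 0

def KelloggConditions (p t : ℕ) (μ : ℕ → ℝ) : Prop :=
  (∀ k ∈ kelloggSet p t μ,
    -(∑ i ∈ (kelloggSet p t μ).filter (· < k), (μ i + μ (p + t - i + 2))) - μ (p + t - k + 2) ≤
      μ 1) ∧
  (2 * p ≤ p + t →
    -(∑ i ∈ kelloggSet p t μ, (μ i + μ (p + t - i + 2))) - ∑ j ∈ Icc (p + 1) (t + 1), μ j ≤ μ 1)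

section Kellogg

variable {p t : ℕ} {μ : ℕ → ℝ} {Q : ℕ → Multiset ℝ}

theorem le_of_mem_kelloggSet (hpos : ∀ i ∈ Icc 1 p, 0 ≤ μ i)
    (hneg : ∀ m ∈ Icc (p + 1) (p + t), μ m < 0) {k : ℕ} (hk : k ∈ kelloggSet p t μ) :
    2 ≤ k ∧ k ≤ p ∧ k ≤ t + 1 := by
  simp only [kelloggSet, mem_filter, mem_Icc] at hk
  obtain ⟨⟨hk2, hkN⟩, hk0, hkpair⟩ := hk
  refine ⟨hk2, ?_, ?_⟩
  · by_contra h
    exact (hneg k (mem_Icc.2 ⟨by omega, by omega⟩)).not_ge hk0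
  · by_contra h
    linarith [hpos (p + t - k + 2) (mem_Icc.2 ⟨by omega, by omega⟩)]

theorem kellogg_seed_nonneg (hp : 1 ≤ p) (hpos : ∀ i ∈ Icc 1 p, 0 ≤ μ i)
    (hK : KelloggConditions p t μ) :
    0 ≤ μ 1 + ∑ i ∈ kelloggSet p t μ, (μ i + μ (p + t - i + 2)) +
      ∑ m ∈ Icc (p + 1) (t + 1), μ m := by
  rcases le_or_gt p t with hpt | htp
  · linarith [hK.2 (by omega)]
  rw [Icc_eq_empty (by omega), sum_empty, add_zero]
  rcases (kelloggSet p t μ).eq_empty_or_nonempty with hempty | hne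
  · rw [hempty, sum_empty, add_zero]
    exact hpos 1 (mem_Icc.2 ⟨le_rfl, hp⟩)
  obtain ⟨k, hk, hmax⟩ := (kelloggSet p t μ).exists_max_image id hne
  have htop : (kelloggSet p t μ).filter (fun i ↦ ¬ i < k) = {k} := by
    ext i
    simp only [mem_filter, mem_singleton]
    exact ⟨fun ⟨hi, hik⟩ ↦ le_antisymm (hmax i hi) (not_lt.1 hik),
      by rintro rfl; exact ⟨hk, lt_irrefl i⟩⟩
  rw [← sum_filter_add_sum_filter_not _ (· < k), htop, sum_singleton]
  linarith [hK.1 k hk, (mem_filter.1 hk).2.1]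

theorem perronRealizable_kellogg_main (hp : 1 ≤ p) (hpos : ∀ i ∈ Icc 1 p, 0 ≤ μ i)
    (hneg : ∀ m ∈ Icc (p + 1) (p + t), μ m < 0) (hK : KelloggConditions p t μ)
    (hQ : ∀ m, ∀ ν ∈ Q m, ν ≤ 0) (hμQ : ∀ m ∈ Icc (p + 1) (p + t), μ m = (Q m).sum) :
    PerronRealizable (μ 1)
      (∑ m ∈ Icc (p + 1) (t + 1), Q m + ∑ k ∈ kelloggSet p t μ, μ k ::ₘ Q (p + t - k + 2)) := by
  have hpartner : ∀ k ∈ kelloggSet p t μ, (Q (p + t - k + 2)).sum = μ (p + t - k + 2) := by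
    intro k hk
    obtain ⟨hk2, -, hkt⟩ := le_of_mem_kelloggSet hpos hneg hk
    exact (hμQ _ (mem_Icc.2 ⟨by omega, by omega⟩)).symm
  have hsum : ∀ s ⊆ kelloggSet p t μ, ∑ i ∈ s, (μ i + (Q (p + t - i + 2)).sum) =
      ∑ i ∈ s, (μ i + μ (p + t - i + 2)) :=
    fun s hs ↦ sum_congr rfl fun i hi ↦ by rw [hpartner i (hs hi)]
  refine .add_sum_cons _ _ _ (fun k _ ↦ hQ _) (fun k hk ↦ ?_) (fun k hk ↦ ?_) (.of_nonpos ?_ ?_)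
  · rw [hpartner k hk]
    exact (mem_filter.1 hk).2.2.le
  · rw [hsum _ (filter_subset _ _), hpartner k hk]
    linarith [hK.1 k hk]
  · intro ν hν
    obtain ⟨m, -, hm⟩ := Multiset.mem_sum.1 hν
    exact hQ m ν hm
  · rw [hsum _ subset_rfl, Multiset.sum_sum,
      sum_congr rfl fun m hm ↦ (hμQ m (mem_Icc.2 ⟨(mem_Icc.1 hm).1, by
        have := (mem_Icc.1 hm).2; omega⟩)).symm]
    exact kellogg_seed_nonneg hp hpos hK

theorem perronRealizable_kellogg_pair (hpos : ∀ i ∈ Icc 1 p, 0 ≤ μ i)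
    (hQ : ∀ m, ∀ ν ∈ Q m, ν ≤ 0) (hμQ : ∀ m ∈ Icc (p + 1) (p + t), μ m = (Q m).sum)
    (hQout : ∀ m ∉ Icc (p + 1) (p + t), Q m = 0) {i : ℕ} (hi : i ∈ Icc 2 p \ kelloggSet p t μ) :
    PerronRealizable (μ i) (Q (p + t - i + 2)) := by
  obtain ⟨hi, hiK⟩ := mem_sdiff.1 hi
  rw [mem_Icc] at hi
  have hμi := hpos i (mem_Icc.2 ⟨by omega, hi.2⟩)
  refine .of_nonpos (hQ _) ?_
  by_cases hit : i ≤ t + 1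
  · rw [← hμQ _ (mem_Icc.2 ⟨by omega, by omega⟩)]
    by_contra h
    exact hiK (mem_filter.2 ⟨mem_Icc.2 ⟨hi.1, by omega⟩, hμi, not_le.1 h⟩)
  · rw [hQout _ (by rw [mem_Icc]; omega), Multiset.sum_zero, add_zero]
    exact hμi

theorem sum_Icc_add_sum_partner (hQout : ∀ m ∉ Icc (p + 1) (p + t), Q m = 0) :
    ∑ m ∈ Icc (p + 1) (t + 1), Q m + ∑ i ∈ Icc 2 p, Q (p + t - i + 2) =
      ∑ m ∈ Icc (p + 1) (p + t), Q m := by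
  have hreflect : ∑ i ∈ Icc 2 p, Q (p + t - i + 2) = ∑ m ∈ Icc (t + 2) (p + t), Q m :=
    sum_nbij' (fun i ↦ p + t - i + 2) (fun m ↦ p + t - m + 2)
      (fun _ h ↦ by simp only [mem_Icc] at h ⊢; omega)
      (fun _ h ↦ by simp only [mem_Icc] at h ⊢; omega)
      (fun _ h ↦ by simp only [mem_Icc] at h; omega) (fun _ h ↦ by simp only [mem_Icc] at h; omega)
      fun _ _ ↦ rfl
  have hdisj : Disjoint (Icc (p + 1) (t + 1)) (Icc (t + 2) (p + t)) :=
    disjoint_left.2 fun m h₁ h₂ ↦ by simp only [mem_Icc] at h₁ h₂; omega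
  rw [hreflect, ← sum_union hdisj]
  refine (sum_subset (fun m hm ↦ ?_) fun m _ hm ↦ hQout m hm).symm
  simp only [mem_union, mem_Icc] at hm ⊢
  omega

theorem kellogg_blocks_eq (hp : 1 ≤ p) {K : Finset ℕ} (hK : K ⊆ Icc 2 p)
    (hQout : ∀ m ∉ Icc (p + 1) (p + t), Q m = 0) :
    μ 1 ::ₘ (∑ m ∈ Icc (p + 1) (t + 1), Q m + ∑ k ∈ K, μ k ::ₘ Q (p + t - k + 2)) +
        ∑ i ∈ Icc 2 p \ K, μ i ::ₘ Q (p + t - i + 2) =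
      ∑ i ∈ Icc 1 p, {μ i} + ∑ m ∈ Icc (p + 1) (p + t), Q m := by
  have hsplit : ∑ i ∈ Icc 2 p \ K, μ i ::ₘ Q (p + t - i + 2) + ∑ k ∈ K, μ k ::ₘ Q (p + t - k + 2) =
      ∑ i ∈ Icc 2 p, {μ i} + ∑ i ∈ Icc 2 p, Q (p + t - i + 2) := by
    rw [sum_sdiff hK, ← sum_add_distrib]
    exact sum_congr rfl fun i _ ↦ (Multiset.singleton_add _ _).symm
  rw [← sum_Icc_add_sum_partner hQout, ← insert_Icc_add_one_left_eq_Icc hp, sum_insert (by simp),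
    ← Multiset.singleton_add, one_add_one_eq_two]
  calc _ = {μ 1} + ∑ m ∈ Icc (p + 1) (t + 1), Q m +
        (∑ i ∈ Icc 2 p \ K, μ i ::ₘ Q (p + t - i + 2) + ∑ k ∈ K, μ k ::ₘ Q (p + t - k + 2)) := by
        abel
    _ = _ := by rw [hsplit]; abel

theorem realizable_kellogg (hp : 1 ≤ p) (hpos : ∀ i ∈ Icc 1 p, 0 ≤ μ i)
    (hneg : ∀ m ∈ Icc (p + 1) (p + t), μ m < 0) (hK : KelloggConditions p t μ)
    (hQ : ∀ m, ∀ ν ∈ Q m, ν ≤ 0) (hμQ : ∀ m ∈ Icc (p + 1) (p + t), μ m = (Q m).sum)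
    (hQout : ∀ m ∉ Icc (p + 1) (p + t), Q m = 0) :
    Realizable (∑ i ∈ Icc 1 p, {μ i} + ∑ m ∈ Icc (p + 1) (p + t), Q m) := by
  have hsub : kelloggSet p t μ ⊆ Icc 2 p := fun k hk ↦ by
    obtain ⟨hk2, hkp, -⟩ := le_of_mem_kelloggSet hpos hneg hk
    exact mem_Icc.2 ⟨hk2, hkp⟩
  rw [← kellogg_blocks_eq hp hsub hQout]
  exact (perronRealizable_kellogg_main hp hpos hneg hK hQ hμQ).realizable.add
    (.sum _ _ fun i hi ↦ (perronRealizable_kellogg_pair hpos hQ hμQ hQout hi).realizable)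

end Kellogg

theorem realizable_borobia {p t : ℕ} {μ : ℕ → ℝ} (hp : 1 ≤ p) (hpos : ∀ i ∈ Icc 1 p, 0 ≤ μ i)
    (hK : KelloggConditions p t μ) (J : Fin t → Multiset ℝ) (hJne : ∀ j, J j ≠ 0)
    (hJneg : ∀ j, ∀ ν ∈ J j, ν < 0) (hμJ : ∀ j : Fin t, μ (p + 1 + (j : ℕ)) = (J j).sum) :
    Realizable (∑ i ∈ Icc 1 p, {μ i} + ∑ j, J j) := by
  let Q : ℕ → Multiset ℝ := Function.extend (fun j : Fin t ↦ p + 1 + (j : ℕ)) J 0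
  have hinj : Function.Injective fun j : Fin t ↦ p + 1 + (j : ℕ) :=
    fun i j h ↦ Fin.ext (by simpa using h)
  have hQJ (j : Fin t) : Q (p + 1 + j) = J j := hinj.extend_apply J 0 j
  have hcover (m : ℕ) (hm : m ∈ Icc (p + 1) (p + t)) : ∃ j : Fin t, p + 1 + (j : ℕ) = m := by
    rw [mem_Icc] at hm
    exact ⟨⟨m - (p + 1), by omega⟩, by simp only; omega⟩
  have hQout (m : ℕ) (hm : m ∉ Icc (p + 1) (p + t)) : Q m = 0 :=
    Function.extend_apply' _ _ _ fun ⟨j, hj⟩ ↦ hm (mem_Icc.2 ⟨by omega, by omega⟩)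
  have hQ (m : ℕ) : ∀ ν ∈ Q m, ν ≤ 0 := by
    by_cases hm : m ∈ Icc (p + 1) (p + t)
    · obtain ⟨j, rfl⟩ := hcover m hm
      exact fun ν hν ↦ (hJneg j ν (hQJ j ▸ hν)).le
    · simp [hQout m hm]
  have hμQ (m : ℕ) (hm : m ∈ Icc (p + 1) (p + t)) : μ m = (Q m).sum := by
    obtain ⟨j, rfl⟩ := hcover m hm
    rw [hQJ, hμJ]
  have hneg (m : ℕ) (hm : m ∈ Icc (p + 1) (p + t)) : μ m < 0 := by
    obtain ⟨j, rfl⟩ := hcover m hm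
    rw [hμJ]
    simpa using Multiset.sum_lt_sum_of_nonempty (f := id) (g := 0) (hJne j) (hJneg j)
  have hsum : ∑ m ∈ Icc (p + 1) (p + t), Q m = ∑ j, J j :=
    (sum_bij (fun (j : Fin t) _ ↦ p + 1 + (j : ℕ)) (fun j _ ↦ mem_Icc.2 ⟨by omega, by omega⟩)
      (fun i _ j _ h ↦ hinj h) (fun m hm ↦ by simpa using hcover m hm)
      fun j _ ↦ (hQJ j).symm).symm
  rw [← hsum]
  exact realizable_kellogg hp hpos hneg hK hQ hμQ hQout

theorem map_Icc_eq_sum_singleton_add {α : Type*} (f : ℕ → α) {p n : ℕ} (hpn : p ≤ n) :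
    (Icc 1 n).val.map f = ∑ i ∈ Icc 1 p, {f i} + (Icc (p + 1) n).val.map f := by
  have hdisj : Disjoint (Icc 1 p) (Icc (p + 1) n) := disjoint_left.2 fun i h₁ h₂ ↦ by
    simp only [mem_Icc] at h₁ h₂; omega
  have hunion : (Icc 1 p).disjUnion (Icc (p + 1) n) hdisj = Icc 1 n := by
    ext i; simp only [disjUnion_eq_union, mem_union, mem_Icc]; omega
  rw [← hunion, disjUnion_val, Multiset.map_add, sum_eq_multiset_sum,
    ← Multiset.sum_map_singleton ((Icc 1 p).val.map f), Multiset.map_map]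
  rfl

theorem borobia_general (n p t : ℕ) (l : ℕ → ℝ)
    (hp1 : 1 ≤ p) (hpn : p ≤ n)
    (hanti : ∀ i j, 1 ≤ i → i ≤ j → j ≤ n → l j ≤ l i)
    (hlp : 0 ≤ l p)
    (hneg : ∀ j, p < j → j ≤ n → l j < 0)
    (J : Fin t → Multiset ℝ)
    (hJne : ∀ j, J j ≠ 0)
    (hpart : ∑ j : Fin t, J j = (Finset.Icc (p + 1) n).val.map l)
    (μ : ℕ → ℝ)
    (hμ1 : ∀ i, 1 ≤ i → i ≤ p → μ i = l i)
    (hμ2 : ∀ j : Fin t, μ (p + 1 + (j : ℕ)) = (J j).sum)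
    (K : Finset ℕ)
    (hK : K = (Finset.Icc 2 ((p + t + 1) / 2)).filter
      (fun i => 0 ≤ μ i ∧ μ i + μ (p + t - i + 2) < 0))
    (h1 : ∀ k ∈ K,
      -(∑ i ∈ K.filter (fun i => i < k), (μ i + μ (p + t - i + 2))) - μ (p + t - k + 2) ≤ μ 1)
    (h2 : 2 * p ≤ p + t →
      -(∑ i ∈ K, (μ i + μ (p + t - i + 2))) -
        ∑ j ∈ Finset.Icc (p + 1) (p + t - p + 1), μ j ≤ μ 1) :
    ∃ A : Matrix (Fin n) (Fin n) ℝ, (∀ i j, 0 ≤ A i j) ∧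
      A.charpoly = ∏ i ∈ Finset.Icc 1 n, (X - C (l i)) := by
  subst hK
  have hJneg (j : Fin t) : ∀ ν ∈ J j, ν < 0 := fun ν hν ↦ by
    obtain ⟨i, hi, rfl⟩ := Multiset.mem_map.1 (hpart ▸ Multiset.mem_sum.2 ⟨j, mem_univ j, hν⟩)
    rw [mem_val, mem_Icc] at hi
    exact hneg i hi.1 hi.2
  have hpos (i : ℕ) (hi : i ∈ Icc 1 p) : 0 ≤ μ i := by
    rw [mem_Icc] at hi
    rw [hμ1 i hi.1 hi.2]
    exact hlp.trans (hanti i p hi.1 hi.2 hpn)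
  have hsplit : ∑ i ∈ Icc 1 p, {μ i} + ∑ j, J j = (Icc 1 n).val.map l := by
    rw [map_Icc_eq_sum_singleton_add l hpn, hpart]
    refine congrArg (· + _) (sum_congr rfl fun i hi ↦ ?_)
    rw [hμ1 i (mem_Icc.1 hi).1 (mem_Icc.1 hi).2]
  obtain ⟨A, hA, hcp⟩ := (realizable_borobia hp1 hpos ⟨h1, by rwa [Nat.add_sub_cancel_left] at h2⟩ J
    hJne hJneg hμ2).exists_matrix (n := n) (by rw [hsplit]; simp)
  refine ⟨A, hA, ?_⟩
  rw [hcp, hsplit, prod_eq_multiset_prod, Multiset.map_map]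
  rfl

/-- **Borobia's theorem.** Here the list is `(l 1, …, l n)` (one-based indices), with
`λ_1 ≥ ⋯ ≥ λ_p ≥ 0 > λ_{p+1} ≥ ⋯ ≥ λ_n` and `p` the greatest index with `λ_j ≥ 0`.
Suppose the multiset `{λ_{p+1}, …, λ_n}` can be partitioned into nonempty multisets
`J_1, …, J_t` (`1 ≤ t ≤ n - p`) such that, writing `μ_i = λ_i` for `i ≤ p` and
`μ_{p+j} = ∑_{λ ∈ J_j} λ`, the list `(μ_1, …, μ_{p+t})` is nonincreasing and
satisfies the Kellogg conditions (with `N = p + t` and the same `p`). Then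
`(λ_1, …, λ_n)` is realizable. -/
theorem borobia (n p t : ℕ) (l : ℕ → ℝ)
    (hp1 : 1 ≤ p) (hpn : p ≤ n)
    (hanti : ∀ i j, 1 ≤ i → i ≤ j → j ≤ n → l j ≤ l i)
    (hlp : 0 ≤ l p)
    (hneg : ∀ j, p < j → j ≤ n → l j < 0)
    (ht1 : 1 ≤ t) (ht2 : t ≤ n - p)
    (J : Fin t → Multiset ℝ)
    (hJne : ∀ j, J j ≠ 0)
    (hpart : ∑ j : Fin t, J j = (Finset.Icc (p + 1) n).val.map l)
    (μ : ℕ → ℝ)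
    (hμ1 : ∀ i, 1 ≤ i → i ≤ p → μ i = l i)
    (hμ2 : ∀ j : Fin t, μ (p + 1 + (j : ℕ)) = (J j).sum)
    (hμanti : ∀ i j, 1 ≤ i → i ≤ j → j ≤ p + t → μ j ≤ μ i)
    (K : Finset ℕ)
    (hK : K = (Finset.Icc 2 ((p + t + 1) / 2)).filter
      (fun i => 0 ≤ μ i ∧ μ i + μ (p + t - i + 2) < 0))
    (h1 : ∀ k ∈ K,
      -(∑ i ∈ K.filter (fun i => i < k), (μ i + μ (p + t - i + 2))) - μ (p + t - k + 2) ≤ μ 1)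
    (h2 : 2 * p ≤ p + t →
      -(∑ i ∈ K, (μ i + μ (p + t - i + 2))) -
        ∑ j ∈ Finset.Icc (p + 1) (p + t - p + 1), μ j ≤ μ 1) :
    ∃ A : Matrix (Fin n) (Fin n) ℝ, (∀ i j, 0 ≤ A i j) ∧
      A.charpoly = ∏ i ∈ Finset.Icc 1 n, (X - C (l i)) :=
  borobia_general n p t l hp1 hpn hanti hlp hneg J hJne hpart μ hμ1 hμ2 K hK h1 h2
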